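/- arXiv:0709.4319 — 2 statements merged into one kernel-verified Lean document; each statement's English description precedes it below -/
import Mathlib

section
/- Let λ ∈ ℂ with λ ∉ ℝ and |λ| ≠ 1, λ ≠ 0 (i.e. the linear conformal map B(z) = λz is the composition of a nontrivial rotation, of angle different from 0 and π, with a homothety of ratio |λ| ≠ 1). Let U ⊆ ℂ be an open neighborhood of 0 and let g : U → ℂ be a C¹ diffeomorphism onto its image such that g(λz) = λ·g(z) for all z in some neighborhood of 0 on which both sides are defined. Then g coincides with a conformal linear map near 0: there exist μ ∈ ℂ, μ ≠ 0, and a neighborhood V of 0 such that g(z) = μz for all z ∈ V. -/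
/-!
Differentiating `g (λ z) = λ g z` at `0` shows that the real-linear map `Dg(0)` commutes with
multiplication by `λ`; as `λ` is not real, `λ` and `1` span `ℂ` over `ℝ`, so `Dg(0)` is
multiplication by some `μ ≠ 0`. The remainder `φ z = g z - μ z` is `o(z)` and satisfies
`φ (c z) = c φ z` for `c = λ` or `c = λ⁻¹`, whichever has `|c| < 1`. Hence
`|φ z| = |c|⁻ⁿ |φ (cⁿ z)| = o(1) |z|` as `n → ∞`, so `φ` vanishes near `0`.
-/

open Filter Topology Asymptotics Metric

theorem Complex.linearMap_apply_eq_map_one_mul {lam : ℂ} (him : lam.im ≠ 0) (L : ℂ →ₗ[ℝ] ℂ)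
    (hL : L lam = lam * L 1) (z : ℂ) : L z = L 1 * z := by
  have hreal : ∀ (a : ℝ) (w : ℂ), L (a * w) = a * L w := fun a w => by
    simpa only [Complex.real_smul] using L.map_smul a w
  have hreal_one : ∀ a : ℝ, L a = a * L 1 := fun a => by simpa using hreal a 1
  have hI : L I = I * L 1 := by
    have hlam : L lam = lam.re * L 1 + lam.im * L I := by
      conv_lhs => rw [← re_add_im lam]
      rw [map_add, hreal, hreal_one]
    refine mul_left_cancel₀ (ofReal_ne_zero.2 him) ?_
    linear_combination hlam.symm.trans hL - L 1 * re_add_im lam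
  conv_lhs => rw [← re_add_im z]
  rw [map_add, hreal, hreal_one, hI]
  conv_rhs => rw [← re_add_im z]
  ring

section Derivative

variable {𝕜 E F : Type*} [NontriviallyNormedField 𝕜] [NormedAddCommGroup E] [NormedSpace 𝕜 E]
  [NormedAddCommGroup F] [NormedSpace 𝕜 F]

theorem HasFDerivAt.comp_eq_comp_of_eventually_semiconj {f : E → F} {f' : E →L[𝕜] F}
    (hf : HasFDerivAt f f' 0) (A : E →L[𝕜] E) (B : F →L[𝕜] F)
    (h : (fun x => f (A x)) =ᶠ[𝓝 0] fun x => B (f x)) : f'.comp A = B.comp f' := by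
  have hfA : HasFDerivAt (fun x => f (A x)) (f'.comp A) 0 :=
    (A.map_zero ▸ hf).comp 0 A.hasFDerivAt
  exact (hfA.congr_of_eventuallyEq h.symm).unique (B.hasFDerivAt.comp 0 hf)

end Derivative

section Homogeneous

variable {𝕜 E F : Type*} [NormedField 𝕜] [NormedAddCommGroup E] [NormedSpace 𝕜 E]
  [NormedAddCommGroup F] [NormedSpace 𝕜 F] {φ : E → F} {c : 𝕜}

theorem eq_zero_of_isLittleO_of_map_smul (hφ : φ =o[𝓝 0] fun x => x) (hc0 : c ≠ 0)
    (hc1 : ‖c‖ < 1) {s : Set E} (hs : Set.MapsTo (c • ·) s s)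
    (h : ∀ x ∈ s, φ (c • x) = c • φ x) {x : E} (hx : x ∈ s) : φ x = 0 := by
  have hpow : ∀ n : ℕ, c ^ n • x ∈ s ∧ φ (c ^ n • x) = c ^ n • φ x := by
    intro n
    induction n with
    | zero => simpa using hx
    | succ n ih =>
      rw [pow_succ', mul_smul, mul_smul, h _ ih.1, ih.2]
      exact ⟨hs ih.1, rfl⟩
  have hto : Tendsto (fun n : ℕ => c ^ n • x) atTop (𝓝 0) := by
    simpa using (tendsto_pow_atTop_nhds_zero_of_norm_lt_one hc1).smul_const x
  have horbit := hφ.comp_tendsto hto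
  suffices (fun _ : ℕ => φ x) =o[atTop] fun _ => x from isLittleO_const_const_iff.1 this
  refine isLittleO_iff.2 fun ε hε => (horbit.def hε).mono fun n hn => ?_
  have hcn : 0 < ‖c‖ ^ n := pow_pos (norm_pos_iff.2 hc0) n
  simp only [Function.comp_apply, (hpow n).2, norm_smul, norm_pow] at hn
  exact le_of_mul_le_mul_left (hn.trans_eq (by ring)) hcn

theorem eventuallyEq_zero_of_isLittleO_of_eventually_map_smul (hφ : φ =o[𝓝 0] fun x => x)
    (hc0 : c ≠ 0) (hc1 : ‖c‖ ≠ 1) (h : ∀ᶠ x in 𝓝 0, φ (c • x) = c • φ x) : φ =ᶠ[𝓝 0] 0 := by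
  obtain ⟨r, hr, hball⟩ := eventually_nhds_iff_ball.1 h
  have hbal : Balanced 𝕜 (ball (0 : E) r) := balanced_ball_zero
  refine eventually_of_mem (ball_mem_nhds 0 hr) fun x hx => ?_
  rcases hc1.lt_or_gt with hlt | hgt
  · exact eq_zero_of_isLittleO_of_map_smul hφ hc0 hlt (fun y hy => hbal.smul_mem hlt.le hy)
      hball hx
  · have hinv : ‖c⁻¹‖ < 1 := by simpa using inv_lt_one_of_one_lt₀ hgt
    refine eq_zero_of_isLittleO_of_map_smul hφ (inv_ne_zero hc0) hinv
      (fun y hy => hbal.smul_mem hinv.le hy) (fun y hy => ?_) hx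
    have := hball _ (hbal.smul_mem hinv.le hy)
    rwa [smul_inv_smul₀ hc0, eq_comm, ← eq_inv_smul_iff₀ hc0] at this

end Homogeneous

theorem statement10_general (lam : ℂ) (him : lam.im ≠ 0) (habs : ‖lam‖ ≠ 1)
    (U : Set ℂ)
    (g : ℂ → ℂ)
    (hgdiff : ∀ z ∈ U, ∃ D : ℂ ≃L[ℝ] ℂ, HasFDerivAt g (D : ℂ →L[ℝ] ℂ) z)
    (hcomm : ∃ W ∈ nhds (0 : ℂ), ∀ z ∈ W, z ∈ U ∧ lam * z ∈ U ∧ g (lam * z) = lam * g z) :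
    ∃ μ : ℂ, μ ≠ 0 ∧ ∃ V ∈ nhds (0 : ℂ), ∀ z ∈ V, g z = μ * z := by
  obtain ⟨W, hW, hWcomm⟩ := hcomm
  obtain ⟨D, hD⟩ := hgdiff 0 (hWcomm 0 (mem_of_mem_nhds hW)).1
  have hsemi : ∀ᶠ z in 𝓝 0, g (lam * z) = lam * g z :=
    eventually_of_mem hW fun z hz => (hWcomm z hz).2.2
  have hne : lam ≠ 0 := fun h => him (by simp [h])
  have hg0 : g 0 = 0 := by
    have h := hsemi.self_of_nhds
    rw [mul_zero] at h
    have hlam1 : lam - 1 ≠ 0 := fun h => him (by simp [sub_eq_zero.1 h])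
    simpa [hlam1] using (show (lam - 1) * g 0 = 0 by linear_combination -h)
  set μ := D 1
  have hDμ : ∀ z, D z = μ * z := by
    have hDcomm := congrArg (· 1) <| hD.comp_eq_comp_of_eventually_semiconj
      (ContinuousLinearMap.mul ℝ ℂ lam) (ContinuousLinearMap.mul ℝ ℂ lam) hsemi
    simp only [ContinuousLinearMap.comp_apply, ContinuousLinearMap.mul_apply', mul_one] at hDcomm
    exact Complex.linearMap_apply_eq_map_one_mul him (D : ℂ →ₗ[ℝ] ℂ) hDcomm
  have hμ : μ ≠ 0 := (map_ne_zero_iff D D.injective).2 one_ne_zero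
  have hφ : (fun z => g z - μ * z) =o[𝓝 0] fun z => z := by
    simpa [hg0, hDμ] using hasFDerivAt_iff_isLittleO_nhds_zero.1 hD
  have hφsemi : ∀ᶠ z in 𝓝 0, g (lam • z) - μ * (lam • z) = lam • (g z - μ * z) :=
    hsemi.mono fun z hz => by rw [smul_eq_mul, smul_eq_mul, hz]; ring
  refine ⟨μ, hμ, _, eventuallyEq_zero_of_isLittleO_of_eventually_map_smul hφ hne habs hφsemi,
    fun z hz => sub_eq_zero.1 hz⟩

theorem statement10 (lam : ℂ) (him : lam.im ≠ 0) (habs : ‖lam‖ ≠ 1) (hne : lam ≠ 0)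
    (U : Set ℂ) (hU : IsOpen U) (h0U : (0 : ℂ) ∈ U)
    (g : ℂ → ℂ)
    (hgC1 : ContDiffOn ℝ 1 g U)
    (hginj : Set.InjOn g U)
    (hgdiff : ∀ z ∈ U, ∃ D : ℂ ≃L[ℝ] ℂ, HasFDerivAt g (D : ℂ →L[ℝ] ℂ) z)
    (hcomm : ∃ W ∈ nhds (0 : ℂ), ∀ z ∈ W, z ∈ U ∧ lam * z ∈ U ∧ g (lam * z) = lam * g z) :
    ∃ μ : ℂ, μ ≠ 0 ∧ ∃ V ∈ nhds (0 : ℂ), ∀ z ∈ V, g z = μ * z :=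
  statement10_general lam him habs U g hgdiff hcomm
end

section
/- Let d ≥ 2, let A be an invertible linear endomorphism of ℝ^d, and let i ∈ {1, …, d−1}. Suppose that A has a complex eigenvalue of rank (i, i+1): there is an A-invariant direct sum decomposition ℝ^d = E′ ⊕ F′ ⊕ G′ with dim E′ = i−1, dim F′ = 2, dim G′ = d−i−1, such that the restriction of A to F′ has a pair of non-real complex conjugate eigenvalues of modulus λ, every complex eigenvalue of the restriction of A to E′ has modulus strictly less than λ, and every complex eigenvalue of the restriction of A to G′ has modulus strictly greater than λ. Then for every A-invariant direct sum decomposition ℝ^d = E ⊕ F such that every complex eigenvalue of the restriction of A to E has modulus strictly smaller than every complex eigenvalue of the restriction of A to F, one has dim E ≠ i. -/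
/-!
The moduli of the complex eigenvalues of `A`, counted with multiplicity, form a multiset that
splits along any invariant decomposition. Along `E' ⊕ F' ⊕ G'` it consists of `i - 1` values
below `λ`, the value `λ` twice (from the conjugate pair `z, z̄`), and `d - i - 1` values above
`λ`. Along a dominated splitting `E ⊕ F`, the copies of `λ` lie on one side: if on `E`, all
`d - dim E` moduli on `F` exceed `λ`, so `d - dim E ≤ d - i - 1`; if on `F`, all `dim E`
moduli on `E` are below `λ`, so `dim E ≤ i - 1`.
-/

open Polynomial Module

namespace Submodule

variable {R M : Type*} [Semiring R] [AddCommMonoid M] [Module R M]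

lemma isCompl_comap_subtype_sup {p q : Submodule R M} (h : Disjoint p q) :
    IsCompl (p.comap (p ⊔ q).subtype) (q.comap (p ⊔ q).subtype) := by
  constructor
  · rw [disjoint_iff, ← comap_inf, disjoint_iff.mp h, comap_bot, ker_subtype]
  · rw [codisjoint_iff]
    apply map_injective_of_injective (injective_subtype (p ⊔ q))
    rw [map_sup, map_comap_eq, map_comap_eq, range_subtype, map_top, range_subtype,
      inf_eq_right.mpr le_sup_left, inf_eq_right.mpr le_sup_right]

end Submodule

namespace LinearMap

section Field

variable {K V : Type*} [Field K] [AddCommGroup V] [Module K V] [FiniteDimensional K V]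

lemma charpoly_eq_mul_of_isCompl (f : V →ₗ[K] V) {E F : Submodule K V} (h : IsCompl E F)
    (hE : ∀ x ∈ E, f x ∈ E) (hF : ∀ x ∈ F, f x ∈ F) :
    f.charpoly = (f.restrict hE).charpoly * (f.restrict hF).charpoly := by
  set e := Submodule.prodEquivOfIsCompl E F h
  have hconj : f = e.conj ((f.restrict hE).prodMap (f.restrict hF)) := by
    ext v
    obtain ⟨p, rfl⟩ := e.surjective v
    rw [LinearEquiv.conj_apply_apply, LinearEquiv.symm_apply_apply]
    simp [e, coe_restrict_apply]
  conv_lhs => rw [hconj]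
  rw [LinearEquiv.charpoly_conj, charpoly_prodMap]

lemma charpoly_restrict_restrict (f : V →ₗ[K] V) {E W : Submodule K V} (hEW : E ≤ W)
    (hW : ∀ x ∈ W, f x ∈ W) (hE : ∀ x ∈ E, f x ∈ E)
    (hE' : ∀ x ∈ E.comap W.subtype, f.restrict hW x ∈ E.comap W.subtype) :
    ((f.restrict hW).restrict hE').charpoly = (f.restrict hE).charpoly := by
  set e := Submodule.comapSubtypeEquivOfLe hEW
  have hconj : f.restrict hE = e.conj ((f.restrict hW).restrict hE') := by
    ext v
    obtain ⟨p, rfl⟩ := e.surjective v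
    rw [LinearEquiv.conj_apply_apply, LinearEquiv.symm_apply_apply]
    simp [e]
  rw [hconj, LinearEquiv.charpoly_conj]

lemma charpoly_restrict_sup (f : V →ₗ[K] V) {E F : Submodule K V} (h : Disjoint E F)
    (hE : ∀ x ∈ E, f x ∈ E) (hF : ∀ x ∈ F, f x ∈ F) (hEF : ∀ x ∈ E ⊔ F, f x ∈ E ⊔ F) :
    (f.restrict hEF).charpoly = (f.restrict hE).charpoly * (f.restrict hF).charpoly := by
  have hmaps {P : Submodule K V} (hP : ∀ x ∈ P, f x ∈ P) :
      ∀ x ∈ P.comap (E ⊔ F).subtype, f.restrict hEF x ∈ P.comap (E ⊔ F).subtype :=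
    fun x hx ↦ hP _ hx
  rw [charpoly_eq_mul_of_isCompl _ (Submodule.isCompl_comap_subtype_sup h) (hmaps hE) (hmaps hF),
    charpoly_restrict_restrict f le_sup_left hEF hE,
    charpoly_restrict_restrict f le_sup_right hEF hF]

end Field

variable {V : Type*} [AddCommGroup V] [Module ℝ V] [FiniteDimensional ℝ V]

noncomputable def eigenvalueNorms (f : V →ₗ[ℝ] V) : Multiset ℝ :=
  (f.charpoly.aroots ℂ).map (‖·‖)

lemma card_aroots_charpoly (f : V →ₗ[ℝ] V) :
    Multiset.card (f.charpoly.aroots ℂ) = finrank ℝ V := by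
  rw [aroots_def, IsAlgClosed.card_roots_eq_natDegree, natDegree_map, charpoly_natDegree]

lemma card_eigenvalueNorms (f : V →ₗ[ℝ] V) :
    Multiset.card f.eigenvalueNorms = finrank ℝ V := by
  rw [eigenvalueNorms, Multiset.card_map, card_aroots_charpoly]

lemma eigenvalueNorms_eq_add_of_charpoly_eq_mul {V₁ V₂ : Type*} [AddCommGroup V₁] [Module ℝ V₁]
    [FiniteDimensional ℝ V₁] [AddCommGroup V₂] [Module ℝ V₂] [FiniteDimensional ℝ V₂]
    {f : V →ₗ[ℝ] V} {f₁ : V₁ →ₗ[ℝ] V₁} {f₂ : V₂ →ₗ[ℝ] V₂}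
    (h : f.charpoly = f₁.charpoly * f₂.charpoly) :
    f.eigenvalueNorms = f₁.eigenvalueNorms + f₂.eigenvalueNorms := by
  rw [eigenvalueNorms, h,
    aroots_mul (mul_ne_zero (charpoly_monic _).ne_zero (charpoly_monic _).ne_zero),
    Multiset.map_add, eigenvalueNorms, eigenvalueNorms]

lemma eigenvalueNorms_eq_replicate_of_finrank_eq_two (f : V →ₗ[ℝ] V) (hV : finrank ℝ V = 2)
    {z : ℂ} (hz : z.im ≠ 0) (hroot : z ∈ f.charpoly.aroots ℂ) :
    f.eigenvalueNorms = Multiset.replicate 2 ‖z‖ := by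
  have hconj : starRingEnd ℂ z ∈ f.charpoly.aroots ℂ := by
    rw [mem_aroots] at hroot ⊢
    exact ⟨hroot.1, by rw [← Complex.conjAe_coe, aeval_algHom_apply, hroot.2, map_zero]⟩
  have hne : z ≠ starRingEnd ℂ z := fun h ↦ hz (Complex.conj_eq_iff_im.mp h.symm)
  have hnodup : ({z, starRingEnd ℂ z} : Multiset ℂ).Nodup := by simpa using hne
  have hroots : f.charpoly.aroots ℂ = {z, starRingEnd ℂ z} := by
    refine (Multiset.eq_of_le_of_card_le ((Multiset.le_iff_subset hnodup).mpr ?_) ?_).symm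
    · simp [Multiset.cons_subset, hroot, hconj]
    · simp [card_aroots_charpoly, hV]
  simp [eigenvalueNorms, hroots, Multiset.replicate_succ]

end LinearMap

namespace Multiset

variable {α : Type*} [LinearOrder α]

lemma card_le_countP_lt_or_card_le_countP_gt {s t : Multiset α} (hst : ∀ a ∈ s, ∀ b ∈ t, a < b)
    {x : α} (hx : x ∈ s + t) :
    card s ≤ (s + t).countP (· < x) ∨ card t ≤ (s + t).countP (x < ·) := by
  rcases mem_add.mp hx with hs | ht
  · right
    rw [countP_add, countP_eq_card.mpr fun b hb ↦ hst x hs b hb]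
    omega
  · left
    rw [countP_add, countP_eq_card.mpr fun a ha ↦ hst a ha x ht]
    omega

/-- A splitting `s + t` with `s < t` elementwise cannot separate the two copies of `x`. -/
lemma card_ne_succ_of_eq_add_replicate_two_add {s t l u : Multiset α}
    (hst : ∀ a ∈ s, ∀ b ∈ t, a < b) {x : α} (h : s + t = l + replicate 2 x + u)
    (hl : ∀ y ∈ l, y < x) (hu : ∀ y ∈ u, x < y) :
    card s ≠ card l + 1 := by
  have hlt : (s + t).countP (· < x) = card l := by
    have hrep : (replicate 2 x).countP (· < x) = 0 :=
      countP_eq_zero.mpr fun y hy ↦ (eq_of_mem_replicate hy).not_lt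
    have hu' : u.countP (· < x) = 0 := countP_eq_zero.mpr fun y hy ↦ (hu y hy).asymm
    rw [h, countP_add, countP_add, countP_eq_card.mpr hl, hrep, hu', add_zero, add_zero]
  have hgt : (s + t).countP (x < ·) = card u := by
    have hrep : (replicate 2 x).countP (x < ·) = 0 :=
      countP_eq_zero.mpr fun y hy ↦ (eq_of_mem_replicate hy).not_gt
    have hl' : l.countP (x < ·) = 0 := countP_eq_zero.mpr fun y hy ↦ (hl y hy).asymm
    rw [h, countP_add, countP_add, countP_eq_card.mpr hu, hrep, hl', add_zero, zero_add]
  have hcard : card s + card t = card l + 2 + card u := by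
    rw [← card_add, h, card_add, card_add, card_replicate]
  have hx : x ∈ s + t := by simp [h]
  rcases card_le_countP_lt_or_card_le_countP_gt hst hx with hs | ht <;> omega

end Multiset

theorem statement14_general (d : ℕ)
    (A : (Fin d → ℝ) →ₗ[ℝ] (Fin d → ℝ))
    (i : ℕ) (hi1 : 1 ≤ i)
    (E' F' G' : Submodule ℝ (Fin d → ℝ))
    (hE'inv : ∀ x ∈ E', A x ∈ E') (hF'inv : ∀ x ∈ F', A x ∈ F')
    (hG'inv : ∀ x ∈ G', A x ∈ G')
    (hdimE' : Module.finrank ℝ E' = i - 1) (hdimF' : Module.finrank ℝ F' = 2)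
    (hindep1 : E' ⊓ F' = ⊥) (hindep2 : (E' ⊔ F') ⊓ G' = ⊥) (hspan : E' ⊔ F' ⊔ G' = ⊤)
    (lam : ℝ)
    (hF'eig : ∃ z : ℂ, z.im ≠ 0 ∧ ‖z‖ = lam ∧
      z ∈ (LinearMap.charpoly (A.restrict hF'inv)).aroots ℂ)
    (hE'eig : ∀ z ∈ (LinearMap.charpoly (A.restrict hE'inv)).aroots ℂ, ‖z‖ < lam)
    (hG'eig : ∀ z ∈ (LinearMap.charpoly (A.restrict hG'inv)).aroots ℂ, lam < ‖z‖) :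
    ∀ (E F : Submodule ℝ (Fin d → ℝ))
      (hEinv : ∀ x ∈ E, A x ∈ E) (hFinv : ∀ x ∈ F, A x ∈ F),
      E ⊓ F = ⊥ → E ⊔ F = ⊤ →
      (∀ zE ∈ (LinearMap.charpoly (A.restrict hEinv)).aroots ℂ,
        ∀ zF ∈ (LinearMap.charpoly (A.restrict hFinv)).aroots ℂ,
          ‖zE‖ < ‖zF‖) →
      Module.finrank ℝ E ≠ i := by
  intro E F hEinv hFinv hEF_inf hEF_sup hdom hEi
  obtain ⟨z, hz_im, rfl, hz_root⟩ := hF'eig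
  have hWinv : E' ⊔ F' ≤ (E' ⊔ F').comap A :=
    sup_le (fun y hy ↦ Submodule.mem_sup_left (hE'inv y hy))
      (fun y hy ↦ Submodule.mem_sup_right (hF'inv y hy))
  have hsplit₁ := LinearMap.eigenvalueNorms_eq_add_of_charpoly_eq_mul <|
    A.charpoly_eq_mul_of_isCompl ⟨disjoint_iff.mpr hEF_inf, codisjoint_iff.mpr hEF_sup⟩
      hEinv hFinv
  have hsplit₂ := LinearMap.eigenvalueNorms_eq_add_of_charpoly_eq_mul <|
    A.charpoly_eq_mul_of_isCompl ⟨disjoint_iff.mpr hindep2, codisjoint_iff.mpr hspan⟩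
      hWinv hG'inv
  rw [LinearMap.eigenvalueNorms_eq_add_of_charpoly_eq_mul <|
      A.charpoly_restrict_sup (disjoint_iff.mpr hindep1) hE'inv hF'inv hWinv,
    (A.restrict hF'inv).eigenvalueNorms_eq_replicate_of_finrank_eq_two hdimF' hz_im hz_root]
    at hsplit₂
  refine Multiset.card_ne_succ_of_eq_add_replicate_two_add ?_ (hsplit₁.symm.trans hsplit₂)
    ?_ ?_ ?_
  · simpa only [LinearMap.eigenvalueNorms, Multiset.forall_mem_map_iff] using hdom
  · simpa only [LinearMap.eigenvalueNorms, Multiset.forall_mem_map_iff] using hE'eig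
  · simpa only [LinearMap.eigenvalueNorms, Multiset.forall_mem_map_iff] using hG'eig
  · rw [LinearMap.card_eigenvalueNorms, LinearMap.card_eigenvalueNorms, hEi, hdimE']
    omega

theorem statement14 (d : ℕ) (hd : 2 ≤ d)
    (A : (Fin d → ℝ) →ₗ[ℝ] (Fin d → ℝ)) (hA : Function.Bijective A)
    (i : ℕ) (hi1 : 1 ≤ i) (hi2 : i ≤ d - 1)
    (E' F' G' : Submodule ℝ (Fin d → ℝ))
    (hE'inv : ∀ x ∈ E', A x ∈ E') (hF'inv : ∀ x ∈ F', A x ∈ F')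
    (hG'inv : ∀ x ∈ G', A x ∈ G')
    (hdimE' : Module.finrank ℝ E' = i - 1) (hdimF' : Module.finrank ℝ F' = 2)
    (hdimG' : Module.finrank ℝ G' = d - i - 1)
    (hindep1 : E' ⊓ F' = ⊥) (hindep2 : (E' ⊔ F') ⊓ G' = ⊥) (hspan : E' ⊔ F' ⊔ G' = ⊤)
    (lam : ℝ)
    (hF'eig : ∃ z : ℂ, z.im ≠ 0 ∧ ‖z‖ = lam ∧
      z ∈ (LinearMap.charpoly (A.restrict hF'inv)).aroots ℂ)
    (hE'eig : ∀ z ∈ (LinearMap.charpoly (A.restrict hE'inv)).aroots ℂ, ‖z‖ < lam)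
    (hG'eig : ∀ z ∈ (LinearMap.charpoly (A.restrict hG'inv)).aroots ℂ, lam < ‖z‖) :
    ∀ (E F : Submodule ℝ (Fin d → ℝ))
      (hEinv : ∀ x ∈ E, A x ∈ E) (hFinv : ∀ x ∈ F, A x ∈ F),
      E ⊓ F = ⊥ → E ⊔ F = ⊤ →
      (∀ zE ∈ (LinearMap.charpoly (A.restrict hEinv)).aroots ℂ,
        ∀ zF ∈ (LinearMap.charpoly (A.restrict hFinv)).aroots ℂ,
          ‖zE‖ < ‖zF‖) →
      Module.finrank ℝ E ≠ i :=
  statement14_general d A i hi1 E' F' G' hE'inv hF'inv hG'inv hdimE' hdimF' hindep1 hindep2 hspan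
    lam hF'eig hE'eig hG'eig
end
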